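/- arXiv:1712.06710 — 2 statements merged into one kernel-verified Lean document; each statement's English description precedes it below -/
import Mathlib

section
/- Let f(x) = |x|^{σ - n/p⁻} · χ_{B(0,1)}(x) on ℝⁿ, where p is a measurable exponent with p⁻ ≤ p⁺ < 2 and σ satisfies n(1/p⁻ - 1/p⁺) < σ < n(1/p⁻ - 1/2). Then f ∈ L^{p(·)}(ℝⁿ) but f ∉ L²_loc(ℝⁿ). -/
/- STATEMENT 1: Let `f(x) = |x|^(σ - n/p⁻) · χ_{B(0,1)}(x)` on ℝⁿ, where the measurable
exponent `p` satisfies `0 < p⁻ ≤ p x ≤ p⁺ < 2` and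
`n(1/p⁻ - 1/p⁺) < σ < n(1/p⁻ - 1/2)`.  Then `f ∈ L^{p(·)}(ℝⁿ)` (finite modular)
but `f ∉ L²_loc(ℝⁿ)` (it fails to be square integrable on the closed unit ball,
a compact set). -/

open MeasureTheory Metric Set ENNReal

section AuxForStmt1

open Measure

variable {n : ℕ}

lemma key_fun_norm (hn : 0 < n) (f : ℝ → ℝ≥0∞) (hf : Measurable f) :
    ∫⁻ x : EuclideanSpace ℝ (Fin n), f ‖x‖
      = (volume : Measure (EuclideanSpace ℝ (Fin n))).toSphere univ
        * ∫⁻ y in Ioi (0 : ℝ), ENNReal.ofReal (y ^ (n - 1)) * f y := by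
  haveI : Nonempty (Fin n) := ⟨⟨0, hn⟩⟩
  haveI : Nontrivial (EuclideanSpace ℝ (Fin n)) := inferInstance
  set μ : Measure (EuclideanSpace ℝ (Fin n)) := volume with hμ
  have h1 : ∫⁻ x : EuclideanSpace ℝ (Fin n), f ‖x‖ ∂μ
      = ∫⁻ x : ({0}ᶜ : Set (EuclideanSpace ℝ (Fin n))), f ‖(x : EuclideanSpace ℝ (Fin n))‖
          ∂(μ.comap Subtype.val) := by
    rw [lintegral_subtype_comap (measurableSet_singleton 0).compl
      (fun x => f ‖x‖), restrict_compl_singleton]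
  have h2 : ∫⁻ x : ({0}ᶜ : Set (EuclideanSpace ℝ (Fin n))), f ‖(x : EuclideanSpace ℝ (Fin n))‖
        ∂(μ.comap Subtype.val)
      = ∫⁻ p : sphere (0 : EuclideanSpace ℝ (Fin n)) 1 × Ioi (0:ℝ), f p.2
          ∂(μ.toSphere.prod (volumeIoiPow (Module.finrank ℝ (EuclideanSpace ℝ (Fin n)) - 1))) := by
    convert μ.measurePreserving_homeomorphUnitSphereProd.lintegral_comp
      ((hf.comp measurable_subtype_coe).comp measurable_snd) using 1
    · congr 1
      funext x
      simp [homeomorphUnitSphereProd_apply_snd_coe]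
    · rfl
  have h3 : ∫⁻ p : sphere (0 : EuclideanSpace ℝ (Fin n)) 1 × Ioi (0:ℝ), f p.2
        ∂(μ.toSphere.prod (volumeIoiPow (Module.finrank ℝ (EuclideanSpace ℝ (Fin n)) - 1)))
      = μ.toSphere univ * ∫⁻ y : Ioi (0:ℝ), f y
          ∂(volumeIoiPow (Module.finrank ℝ (EuclideanSpace ℝ (Fin n)) - 1)) := by
    have hm : Measurable (fun p : sphere (0 : EuclideanSpace ℝ (Fin n)) 1 × Ioi (0:ℝ) => f p.2) :=
      (hf.comp measurable_subtype_coe).comp measurable_snd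
    rw [MeasureTheory.lintegral_prod _ hm.aemeasurable]
    simp [lintegral_const, mul_comm]
  have h4 : ∫⁻ y : Ioi (0:ℝ), f y
        ∂(volumeIoiPow (Module.finrank ℝ (EuclideanSpace ℝ (Fin n)) - 1))
      = ∫⁻ y in Ioi (0:ℝ),
          ENNReal.ofReal (y ^ (Module.finrank ℝ (EuclideanSpace ℝ (Fin n)) - 1)) * f y := by
    have hm2 : Measurable (fun y : Ioi (0:ℝ) => f y) := hf.comp measurable_subtype_coe
    rw [Measure.volumeIoiPow, lintegral_withDensity_eq_lintegral_mul _
      ((measurable_subtype_coe.pow_const _).ennreal_ofReal) hm2]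
    simp only [Pi.mul_apply]
    exact lintegral_subtype_comap measurableSet_Ioi
      (fun y => ENNReal.ofReal (y ^ (Module.finrank ℝ (EuclideanSpace ℝ (Fin n)) - 1)) * f y)
  rw [h1, h2, h3, h4, finrank_euclideanSpace_fin]

lemma key_indicator (hn : 0 < n) {β : ℝ} (hβ : β < 0) :
    ∫⁻ x : EuclideanSpace ℝ (Fin n),
        (ball (0 : EuclideanSpace ℝ (Fin n)) 1).indicator
          (fun x => ENNReal.ofReal (‖x‖ ^ β)) x
      = (volume : Measure (EuclideanSpace ℝ (Fin n))).toSphere univ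
        * ∫⁻ y in Ioo (0:ℝ) 1, ENNReal.ofReal (y ^ ((n : ℝ) - 1 + β)) := by
  set f : ℝ → ℝ≥0∞ := (Ioo (0:ℝ) 1).indicator (fun y => ENNReal.ofReal (y ^ β)) with hfdef
  have hfm : Measurable f := by
    apply Measurable.indicator _ measurableSet_Ioo
    fun_prop
  have hpt : ∀ x : EuclideanSpace ℝ (Fin n),
      (ball (0 : EuclideanSpace ℝ (Fin n)) 1).indicator
        (fun x => ENNReal.ofReal (‖x‖ ^ β)) x = f ‖x‖ := by
    intro x
    rcases lt_or_eq_of_le (norm_nonneg x) with h0 | h0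
    · rcases lt_or_ge ‖x‖ 1 with h1 | h1
      · rw [indicator_of_mem (mem_ball_zero_iff.2 h1), hfdef,
          indicator_of_mem (mem_Ioo.2 ⟨h0, h1⟩)]
      · rw [indicator_of_notMem (fun hx => absurd (mem_ball_zero_iff.1 hx) (not_lt.2 h1)),
          hfdef, indicator_of_notMem (fun hy => absurd hy.2 (not_lt.2 h1))]
    · rw [indicator_of_mem (mem_ball_zero_iff.2 (by rw [← h0]; norm_num)), hfdef,
        indicator_of_notMem (fun hy => absurd hy.1 (by rw [← h0]; exact lt_irrefl _)),
        ← h0, Real.zero_rpow hβ.ne, ENNReal.ofReal_zero]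
  simp only [hpt]
  rw [key_fun_norm hn f hfm]
  congr 1
  have hcong : ∀ y ∈ Ioi (0:ℝ), ENNReal.ofReal (y ^ (n - 1)) * f y
      = (Ioo (0:ℝ) 1).indicator (fun y => ENNReal.ofReal (y ^ ((n : ℝ) - 1 + β))) y := by
    intro y hy
    rcases lt_or_ge y 1 with h1 | h1
    · rw [hfdef, indicator_of_mem (mem_Ioo.2 ⟨hy, h1⟩), indicator_of_mem (mem_Ioo.2 ⟨hy, h1⟩),
        ← ENNReal.ofReal_mul (pow_nonneg (le_of_lt hy) _)]
      congr 1
      rw [Real.rpow_add hy, ← Real.rpow_natCast y (n - 1)]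
      congr 2
      rw [Nat.cast_sub hn, Nat.cast_one]
    · rw [hfdef, indicator_of_notMem (fun hm => absurd hm.2 (not_lt.2 h1)),
        indicator_of_notMem (fun hm => absurd hm.2 (not_lt.2 h1)), mul_zero]
  rw [setLIntegral_congr_fun measurableSet_Ioi hcong,
    lintegral_indicator measurableSet_Ioo, Measure.restrict_restrict measurableSet_Ioo,
    inter_eq_left.2 (fun y hy => hy.1)]

lemma oneD (s : ℝ) :
    (∫⁻ y in Ioo (0:ℝ) 1, ENNReal.ofReal (y ^ s)) ≠ ∞ ↔ -1 < s := by
  rw [lintegral_ofReal_ne_top_iff_integrable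
    (by fun_prop : Measurable fun y : ℝ => y ^ s).aestronglyMeasurable
    (by filter_upwards [ae_restrict_mem measurableSet_Ioo] with y hy
        using Real.rpow_nonneg hy.1.le _)]
  exact intervalIntegral.integrableOn_Ioo_rpow_iff zero_lt_one

end AuxForStmt1

theorem stmt1 {n : ℕ} (hn : 0 < n) (p : EuclideanSpace ℝ (Fin n) → ℝ)
    (hp : Measurable p)
    (pm pp σ : ℝ) (hpm : 0 < pm) (hle : pm ≤ pp) (hpp : pp < 2)
    (hbounds : ∀ x, pm ≤ p x ∧ p x ≤ pp)
    (hσ1 : (n : ℝ) * (1 / pm - 1 / pp) < σ) (hσ2 : σ < (n : ℝ) * (1 / pm - 1 / 2)) :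
    (∫⁻ x, ENNReal.ofReal
        (|(ball (0 : EuclideanSpace ℝ (Fin n)) 1).indicator
            (fun y => ‖y‖ ^ (σ - (n : ℝ) / pm)) x| ^ p x)) < ∞ ∧
    ¬ IntegrableOn
        (fun x => ((ball (0 : EuclideanSpace ℝ (Fin n)) 1).indicator
            (fun y => ‖y‖ ^ (σ - (n : ℝ) / pm)) x) ^ 2)
        (closedBall (0 : EuclideanSpace ℝ (Fin n)) 1) := by
  haveI : Nonempty (Fin n) := ⟨⟨0, hn⟩⟩
  haveI : Nontrivial (EuclideanSpace ℝ (Fin n)) := inferInstance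
  set α : ℝ := σ - (n : ℝ) / pm with hαdef
  have hpp0 : (0:ℝ) < pp := lt_of_lt_of_le hpm hle
  have hn0 : (0:ℝ) < n := by exact_mod_cast hn
  have hαhalf : α * 2 < -(n:ℝ) := by
    have e2 : (n:ℝ) * (1 / pm - 1 / 2) = (n:ℝ) / pm - (n:ℝ) * (1/2) := by ring
    rw [hαdef]; nlinarith [hσ2, e2]
  have hαneg : α < 0 := by nlinarith
  have hαpp : -(n:ℝ) < α * pp := by
    have e1 : (n : ℝ) * (1 / pm - 1 / pp) = (n:ℝ) / pm - (n:ℝ) / pp := by ring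
    have h1 : -((n:ℝ) / pp) < α := by rw [hαdef]; linarith [hσ1, e1]
    have h2 : -((n:ℝ) / pp) * pp < α * pp := mul_lt_mul_of_pos_right h1 hpp0
    have h3 : -((n:ℝ) / pp) * pp = -(n:ℝ) := by field_simp
    exact lt_of_le_of_lt (le_of_eq h3.symm) h2
  set μ : Measure (EuclideanSpace ℝ (Fin n)) := volume with hμ
  have hC_ne_top : μ.toSphere univ ≠ ∞ := measure_ne_top _ _
  have hC_ne_zero : μ.toSphere univ ≠ 0 := by
    rw [Measure.toSphere_apply_univ]
    refine mul_ne_zero ?_ (measure_ball_pos μ _ one_pos).ne'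
    simp [finrank_euclideanSpace_fin, hn.ne']
  constructor
  · -- modular finiteness
    have hmono : ∀ x : EuclideanSpace ℝ (Fin n),
        ENNReal.ofReal
          (|(ball (0 : EuclideanSpace ℝ (Fin n)) 1).indicator
              (fun y => ‖y‖ ^ α) x| ^ p x)
          ≤ (ball (0 : EuclideanSpace ℝ (Fin n)) 1).indicator
              (fun x => ENNReal.ofReal (‖x‖ ^ (α * pp))) x := by
      intro x
      by_cases hx : x ∈ ball (0 : EuclideanSpace ℝ (Fin n)) 1
      · rw [indicator_of_mem hx, indicator_of_mem hx,
          abs_of_nonneg (Real.rpow_nonneg (norm_nonneg x) α)]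
        rcases eq_or_lt_of_le (norm_nonneg x) with h0 | h0
        · rw [← h0, Real.zero_rpow hαneg.ne, Real.zero_rpow
            (ne_of_gt (lt_of_lt_of_le hpm (hbounds x).1))]
          simp
        · apply ENNReal.ofReal_le_ofReal
          rw [Real.rpow_mul (norm_nonneg x)]
          exact Real.rpow_le_rpow_of_exponent_le
            (Real.one_le_rpow_of_pos_of_le_one_of_nonpos h0
              (le_of_lt (mem_ball_zero_iff.1 hx)) hαneg.le) (hbounds x).2
      · rw [indicator_of_notMem hx, indicator_of_notMem hx, abs_zero,
          Real.zero_rpow (ne_of_gt (lt_of_lt_of_le hpm (hbounds x).1))]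
        simp
    refine lt_of_le_of_lt (lintegral_mono hmono) ?_
    rw [key_indicator hn (mul_neg_of_neg_of_pos hαneg hpp0)]
    apply ENNReal.mul_lt_top hC_ne_top.lt_top
    exact lt_top_iff_ne_top.2 ((oneD _).2 (by linarith))
  · -- not square integrable
    intro hInt
    have h1 : IntegrableOn
        (fun x => ((ball (0 : EuclideanSpace ℝ (Fin n)) 1).indicator
            (fun y => ‖y‖ ^ α) x) ^ 2) (ball (0 : EuclideanSpace ℝ (Fin n)) 1) :=
      hInt.mono_set ball_subset_closedBall
    have heq : EqOn
        (fun x => ((ball (0 : EuclideanSpace ℝ (Fin n)) 1).indicator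
            (fun y => ‖y‖ ^ α) x) ^ 2)
        (fun x : EuclideanSpace ℝ (Fin n) => ‖x‖ ^ (α * 2))
        (ball (0 : EuclideanSpace ℝ (Fin n)) 1) := by
      intro x hx
      simp only [indicator_of_mem hx]
      rw [← Real.rpow_natCast (‖x‖ ^ α) 2, ← Real.rpow_mul (norm_nonneg x)]
      norm_num
    have h2 : IntegrableOn (fun x : EuclideanSpace ℝ (Fin n) => ‖x‖ ^ (α * 2))
        (ball (0 : EuclideanSpace ℝ (Fin n)) 1) :=
      h1.congr_fun heq measurableSet_ball
    have h3 : (∫⁻ x in ball (0 : EuclideanSpace ℝ (Fin n)) 1,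
        ENNReal.ofReal (‖x‖ ^ (α * 2))) ≠ ∞ := by
      rw [lintegral_ofReal_ne_top_iff_integrable h2.1 ?_]
      · exact h2
      · exact Filter.Eventually.of_forall fun x => Real.rpow_nonneg (norm_nonneg x) _
    rw [← lintegral_indicator measurableSet_ball,
      key_indicator hn (by linarith : α * 2 < 0)] at h3
    have h4 : (∫⁻ y in Ioo (0:ℝ) 1, ENNReal.ofReal (y ^ ((n : ℝ) - 1 + α * 2))) ≠ ∞ := by
      intro hcontra
      rw [hcontra, ENNReal.mul_top hC_ne_zero] at h3
      exact h3 rfl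
    have h5 : -1 < (n : ℝ) - 1 + α * 2 := (oneD _).1 h4
    linarith [hαhalf]  -- α*2 < -n, -1 < n-1+α*2
end

section
/- Let A be a (T₂^{p(·)}, 2)-atom associated with a ball B = B(x_B, r_B), meaning supp A ⊂ B̂ (the tent over B) and ‖A‖_{T²₂} ≤ |B|^{1/2} ‖χ_B‖_{p(·)}^{-1}. Then Π_M(A) is supported in B and satisfies ‖Π_M(A)‖_{L²(B)} ≤ C r_B^{2k} |B|^{1/2} ‖χ_B‖_{p(·)}^{-1} for every k ∈ {0,1,…,M}; consequently a fixed multiple C₀ Π_M(A) is a (p(·),2,M)-atom associated with B. -/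
open MeasureTheory Metric Set ENNReal

/-- The Luxemburg (quasi-)norm of `f` in the variable exponent Lebesgue space
`L^{p(·)}(ℝⁿ)`. -/
noncomputable def luxNorm {n : ℕ} (p f : EuclideanSpace ℝ (Fin n) → ℝ) : ℝ :=
  sInf {l : ℝ | 0 < l ∧ (∫⁻ x, ENNReal.ofReal (|f x / l| ^ p x)) ≤ 1}

/-- `p ∈ C^log(ℝⁿ)`: globally log-Hölder continuous exponent. -/
def LogHolder {n : ℕ} (p : EuclideanSpace ℝ (Fin n) → ℝ) : Prop :=
  (∃ C > 0, ∀ x y, |p x - p y| ≤ C / Real.log (Real.exp 1 + 1 / ‖x - y‖)) ∧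
  (∃ C > 0, ∃ pinf : ℝ, 0 ≤ pinf ∧ ∀ x, |p x - pinf| ≤ C / Real.log (Real.exp 1 + ‖x‖))

/-- The dyadic annuli `S_0(B) = B`, `S_i(B) = 2^i B \ 2^{i-1} B` of the ball
`B = B(xB, rB)`. -/
def annulus {n : ℕ} (xB : EuclideanSpace ℝ (Fin n)) (rB : ℝ) :
    ℕ → Set (EuclideanSpace ℝ (Fin n))
  | 0 => ball xB rB
  | (i + 1) => ball xB (2 ^ (i + 1) * rB) \ ball xB (2 ^ i * rB)

/-- `‖χ_s‖_{p(·)}`, the Luxemburg norm of the characteristic function of `s`. -/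
noncomputable def chiNorm {n : ℕ} (p : EuclideanSpace ℝ (Fin n) → ℝ)
    (s : Set (EuclideanSpace ℝ (Fin n))) : ℝ :=
  luxNorm p (s.indicator fun _ => 1)

/- STATEMENT 7: If `A` is a `(T₂^{p(·)},2)`-atom associated with the ball `B = B(x_B,r_B)`
(supported in the tent `B̂ = {(x,t) : x ∈ B(x_B, r_B - t), 0 < t < r_B}` and with
`‖A‖_{T²₂} ≤ |B|^{1/2} ‖χ_B‖_{p(·)}^{-1}`), then `Π_M(A)` is supported in `B` and
`‖Π_M(A)‖_{L²} ≤ C r_B^{2k} |B|^{1/2} ‖χ_B‖_{p(·)}^{-1}` for every `k ∈ {0,…,M}`;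
hence a fixed multiple `C₀ Π_M(A)` is a `(p(·),2,M)`-atom associated with `B`. -/

noncomputable def tentNormSq {n : ℕ} (F : EuclideanSpace ℝ (Fin n) → ℝ → ℝ) : ℝ≥0∞ :=
  ∫⁻ x, ∫⁻ t in Set.Ioi (0 : ℝ), ∫⁻ y in ball x t,
    ENNReal.ofReal ((F y t) ^ 2) / ENNReal.ofReal (t ^ (n + 1))

noncomputable def PiM {n : ℕ} (M : ℕ) (F : EuclideanSpace ℝ (Fin n) → ℝ → ℝ)
    (x : EuclideanSpace ℝ (Fin n)) : ℝ :=
  ∫ t in Set.Ioi (0 : ℝ), t ^ (2 * M) * Real.exp (-t ^ 2) * F x t / t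



lemma auxVolBall {n : ℕ} (y : EuclideanSpace ℝ (Fin n)) {t : ℝ} (ht : 0 < t) :
    volume (ball y t) = ENNReal.ofReal (t ^ n) * volume (ball (0 : EuclideanSpace ℝ (Fin n)) 1) := by
  cases n with
  | zero =>
      have h1 : ball y t = univ := by ext z; simp [mem_ball, Subsingleton.elim z y, ht]
      have h2 : ball (0 : EuclideanSpace ℝ (Fin 0)) 1 = univ := by
        ext z; simp [mem_ball, Subsingleton.elim z (0 : EuclideanSpace ℝ (Fin 0))]
      simp [h1, h2]
  | succ m =>
      rw [Measure.addHaar_ball volume y ht.le, finrank_euclideanSpace_fin]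

noncomputable def auxT {n : ℕ} (A : EuclideanSpace ℝ (Fin n) → ℝ → ℝ)
    (x : EuclideanSpace ℝ (Fin n)) (t : ℝ) (y : EuclideanSpace ℝ (Fin n)) : ℝ≥0∞ :=
  if dist y x < t then ENNReal.ofReal ((A y t) ^ 2) / ENNReal.ofReal (t ^ (n + 1)) else 0

lemma auxT_meas {n : ℕ} {A : EuclideanSpace ℝ (Fin n) → ℝ → ℝ}
    (hA : Measurable (fun q : EuclideanSpace ℝ (Fin n) × ℝ => A q.1 q.2))
    {δ : Type*} [MeasurableSpace δ] {u w : δ → EuclideanSpace ℝ (Fin n)} {v : δ → ℝ}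
    (hu : Measurable u) (hv : Measurable v) (hw : Measurable w) :
    Measurable fun d => auxT A (u d) (v d) (w d) := by
  unfold auxT
  apply Measurable.ite
  · exact measurableSet_lt (hw.dist hu) hv
  · have h1 : Measurable fun d => A (w d) (v d) := hA.comp (hw.prodMk hv)
    exact ((h1.pow_const 2).ennreal_ofReal).div ((hv.pow_const (n + 1)).ennreal_ofReal)
  · exact measurable_const

lemma auxTent {n : ℕ} (A : EuclideanSpace ℝ (Fin n) → ℝ → ℝ)
    (hA : Measurable (fun q : EuclideanSpace ℝ (Fin n) × ℝ => A q.1 q.2)) :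
    tentNormSq A = volume (ball (0 : EuclideanSpace ℝ (Fin n)) 1) *
      ∫⁻ x, ∫⁻ t in Set.Ioi (0 : ℝ), ENNReal.ofReal ((A x t) ^ 2) / ENNReal.ofReal t := by
  classical
  set c := volume (ball (0 : EuclideanSpace ℝ (Fin n)) 1) with hcdef
  have step1 : tentNormSq A = ∫⁻ x, ∫⁻ t in Set.Ioi (0:ℝ), ∫⁻ y, auxT A x t y := by
    unfold tentNormSq
    refine lintegral_congr fun x => ?_
    refine lintegral_congr fun t => ?_
    rw [← lintegral_indicator measurableSet_ball]
    refine lintegral_congr fun y => ?_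
    simp [auxT, indicator_apply, mem_ball]
  have step2 : ∀ x, (∫⁻ t in Set.Ioi (0:ℝ), ∫⁻ y, auxT A x t y) =
      ∫⁻ y, ∫⁻ t in Set.Ioi (0:ℝ), auxT A x t y := by
    intro x
    exact lintegral_lintegral_swap
      (auxT_meas hA measurable_const measurable_fst measurable_snd).aemeasurable
  have step3 : (∫⁻ x, ∫⁻ y, ∫⁻ t in Set.Ioi (0:ℝ), auxT A x t y) =
      ∫⁻ y, ∫⁻ x, ∫⁻ t in Set.Ioi (0:ℝ), auxT A x t y := by
    refine lintegral_lintegral_swap ?_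
    have hm : Measurable fun r : (EuclideanSpace ℝ (Fin n) × EuclideanSpace ℝ (Fin n)) × ℝ =>
        auxT A r.1.1 r.2 r.1.2 :=
      auxT_meas hA measurable_fst.fst measurable_snd measurable_fst.snd
    exact hm.lintegral_prod_right'.aemeasurable
  have step4 : ∀ y, (∫⁻ x, ∫⁻ t in Set.Ioi (0:ℝ), auxT A x t y) =
      ∫⁻ t in Set.Ioi (0:ℝ), ∫⁻ x, auxT A x t y := by
    intro y
    exact lintegral_lintegral_swap
      (auxT_meas hA measurable_fst measurable_snd measurable_const).aemeasurable
  have step5 : ∀ (y : EuclideanSpace ℝ (Fin n)) (t : ℝ), (∫⁻ x, auxT A x t y) =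
      (ENNReal.ofReal ((A y t) ^ 2) / ENNReal.ofReal (t ^ (n + 1))) * volume (ball y t) := by
    intro y t
    have h : (fun x => auxT A x t y) = (ball y t).indicator
        (fun _ => ENNReal.ofReal ((A y t) ^ 2) / ENNReal.ofReal (t ^ (n + 1))) := by
      funext x; simp [auxT, indicator_apply, mem_ball, dist_comm]
    rw [h, lintegral_indicator measurableSet_ball, setLIntegral_const]
  have step6 : ∀ y : EuclideanSpace ℝ (Fin n), (∫⁻ t in Set.Ioi (0:ℝ), ∫⁻ x, auxT A x t y) =
      ∫⁻ t in Set.Ioi (0:ℝ), c * (ENNReal.ofReal ((A y t) ^ 2) / ENNReal.ofReal t) := by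
    intro y
    refine setLIntegral_congr_fun measurableSet_Ioi (fun t ht => ?_)
    have ht : (0:ℝ) < t := ht
    rw [step5, auxVolBall y ht]
    have hb0 : ENNReal.ofReal (t ^ n) ≠ 0 := by
      exact ne_of_gt (ENNReal.ofReal_pos.2 (by positivity))
    have hbt : ENNReal.ofReal (t ^ n) ≠ ⊤ := ofReal_ne_top
    have hsplit : ENNReal.ofReal (t ^ (n + 1)) = ENNReal.ofReal (t ^ n) * ENNReal.ofReal t := by
      rw [← ENNReal.ofReal_mul (by positivity), ← pow_succ]
    rw [hsplit]
    rw [div_eq_mul_inv, div_eq_mul_inv,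
      ENNReal.mul_inv (Or.inl hb0) (Or.inl hbt)]
    calc ENNReal.ofReal ((A y t) ^ 2) * ((ENNReal.ofReal (t ^ n))⁻¹ * (ENNReal.ofReal t)⁻¹) *
          (ENNReal.ofReal (t ^ n) * c)
        = ((ENNReal.ofReal (t ^ n))⁻¹ * ENNReal.ofReal (t ^ n)) *
            (c * (ENNReal.ofReal ((A y t) ^ 2) * (ENNReal.ofReal t)⁻¹)) := by ring
      _ = c * (ENNReal.ofReal ((A y t) ^ 2) * (ENNReal.ofReal t)⁻¹) := by
            rw [ENNReal.inv_mul_cancel hb0 hbt, one_mul]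
  calc tentNormSq A = ∫⁻ x, ∫⁻ t in Set.Ioi (0:ℝ), ∫⁻ y, auxT A x t y := step1
    _ = ∫⁻ x, ∫⁻ y, ∫⁻ t in Set.Ioi (0:ℝ), auxT A x t y := lintegral_congr step2
    _ = ∫⁻ y, ∫⁻ x, ∫⁻ t in Set.Ioi (0:ℝ), auxT A x t y := step3
    _ = ∫⁻ y, ∫⁻ t in Set.Ioi (0:ℝ), ∫⁻ x, auxT A x t y := lintegral_congr step4
    _ = ∫⁻ y, ∫⁻ t in Set.Ioi (0:ℝ), c * (ENNReal.ofReal ((A y t) ^ 2) / ENNReal.ofReal t) :=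
        lintegral_congr step6
    _ = ∫⁻ y, c * ∫⁻ t in Set.Ioi (0:ℝ), ENNReal.ofReal ((A y t) ^ 2) / ENNReal.ofReal t := by
        refine lintegral_congr fun y => ?_
        exact lintegral_const_mul' _ _ measure_ball_lt_top.ne
    _ = c * ∫⁻ y, ∫⁻ t in Set.Ioi (0:ℝ), ENNReal.ofReal ((A y t) ^ 2) / ENNReal.ofReal t :=
        lintegral_const_mul' _ _ measure_ball_lt_top.ne


lemma auxCS (M : ℕ) (hM : 1 ≤ M) {rB : ℝ} (φ : ℝ → ℝ) (hφ : Measurable φ)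
    (hsupp : ∀ t, ¬ (0 < t ∧ t < rB) → φ t = 0) :
    (‖∫ t in Set.Ioi (0:ℝ), t ^ (2 * M) * Real.exp (-t ^ 2) * φ t / t‖₊ : ℝ≥0∞) ≤
      (∫⁻ t in Set.Ioo 0 rB, ENNReal.ofReal (t ^ (4 * M - 1) * Real.exp (-(2 * t ^ 2)))) ^ (1/2 : ℝ) *
      (∫⁻ t in Set.Ioi (0:ℝ), ENNReal.ofReal ((φ t) ^ 2) / ENNReal.ofReal t) ^ (1/2 : ℝ) := by
  classical
  set f : ℝ → ℝ≥0∞ := fun t =>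
    ENNReal.ofReal (t ^ (2 * M) * Real.exp (-t ^ 2)) * ENNReal.ofReal t ^ (-(1/2) : ℝ) with hfdef
  set g : ℝ → ℝ≥0∞ := fun t => ENNReal.ofReal |φ t| * ENNReal.ofReal t ^ (-(1/2) : ℝ) with hgdef
  have hfm : Measurable f := by
    apply Measurable.mul
    · exact Measurable.ennreal_ofReal (by fun_prop)
    · exact (Measurable.ennreal_ofReal measurable_id).pow_const _
  have hgm : Measurable g := by
    apply Measurable.mul
    · exact Measurable.ennreal_ofReal hφ.abs
    · exact (Measurable.ennreal_ofReal measurable_id).pow_const _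
  have hkey : ∀ t : ℝ, 0 < t →
      (‖t ^ (2 * M) * Real.exp (-t ^ 2) * φ t / t‖₊ : ℝ≥0∞) = f t * g t := by
    intro t ht
    have h1 : (ENNReal.ofReal t) ≠ 0 := ne_of_gt (ENNReal.ofReal_pos.2 ht)
    have h2 : (ENNReal.ofReal t) ≠ ⊤ := ofReal_ne_top
    rw [← enorm_eq_nnnorm, Real.enorm_eq_ofReal_abs]
    have habs : |t ^ (2 * M) * Real.exp (-t ^ 2) * φ t / t| =
        (t ^ (2 * M) * Real.exp (-t ^ 2)) * |φ t| / t := by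
      rw [abs_div, abs_of_pos ht, abs_mul,
        abs_of_pos (by positivity : (0:ℝ) < t ^ (2 * M) * Real.exp (-t ^ 2))]
    rw [habs, ENNReal.ofReal_div_of_pos ht, ENNReal.ofReal_mul (by positivity)]
    have hsplit : ENNReal.ofReal t ^ (-(1/2) : ℝ) * ENNReal.ofReal t ^ (-(1/2) : ℝ) =
        (ENNReal.ofReal t)⁻¹ := by
      rw [← ENNReal.rpow_add _ _ h1 h2]
      norm_num
      exact ENNReal.rpow_neg_one _
    simp only [hfdef, hgdef, div_eq_mul_inv]
    rw [← hsplit]; ring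
  have hres : (∫⁻ t in Set.Ioi (0:ℝ), (‖t ^ (2 * M) * Real.exp (-t ^ 2) * φ t / t‖₊ : ℝ≥0∞)) =
      ∫⁻ t in Set.Ioo 0 rB, f t * g t := by
    have h1 : ∀ t ∈ Set.Ioi (0:ℝ), (‖t ^ (2 * M) * Real.exp (-t ^ 2) * φ t / t‖₊ : ℝ≥0∞) =
        (Set.Ioo (0:ℝ) rB).indicator (fun t => f t * g t) t := by
      intro t ht
      have ht : (0:ℝ) < t := ht
      by_cases ht' : t < rB
      · rw [Set.indicator_of_mem (show t ∈ Set.Ioo (0:ℝ) rB from ⟨ht, ht'⟩), hkey t ht]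
      · rw [Set.indicator_of_notMem (by simp [Set.mem_Ioo, ht']), hsupp t (by tauto)]
        simp
    rw [setLIntegral_congr_fun measurableSet_Ioi h1,
      lintegral_indicator measurableSet_Ioo, Measure.restrict_restrict measurableSet_Ioo,
      Set.inter_eq_left.2 Set.Ioo_subset_Ioi_self]
  have hHolder : (∫⁻ t in Set.Ioo 0 rB, f t * g t) ≤
      (∫⁻ t in Set.Ioo 0 rB, f t ^ (2:ℝ)) ^ (1/2 : ℝ) *
      (∫⁻ t in Set.Ioo 0 rB, g t ^ (2:ℝ)) ^ (1/2 : ℝ) := by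
    have := ENNReal.lintegral_mul_le_Lp_mul_Lq (volume.restrict (Set.Ioo 0 rB))
      ((by constructor <;> norm_num) : Real.HolderConjugate 2 2) hfm.aemeasurable hgm.aemeasurable
    simpa using this
  have hinv : ∀ t : ℝ, 0 < t → (ENNReal.ofReal t ^ (-(1/2) : ℝ)) ^ (2:ℕ) =
      (ENNReal.ofReal t)⁻¹ := by
    intro t ht
    have h1 : (ENNReal.ofReal t) ≠ 0 := ne_of_gt (ENNReal.ofReal_pos.2 ht)
    rw [pow_two, ← ENNReal.rpow_add _ _ h1 ofReal_ne_top]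
    norm_num
    exact ENNReal.rpow_neg_one _
  have hf2 : (∫⁻ t in Set.Ioo 0 rB, f t ^ (2:ℝ)) =
      ∫⁻ t in Set.Ioo 0 rB, ENNReal.ofReal (t ^ (4 * M - 1) * Real.exp (-(2 * t ^ 2))) := by
    refine setLIntegral_congr_fun measurableSet_Ioo (fun t ht => ?_)
    obtain ⟨ht0, htr⟩ := ht
    have h1 : (ENNReal.ofReal t) ≠ 0 := ne_of_gt (ENNReal.ofReal_pos.2 ht0)
    have e0 : (t ^ (2 * M) * Real.exp (-t ^ 2)) ^ (2:ℕ) =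
        (t ^ (4 * M - 1) * Real.exp (-(2 * t ^ 2))) * t := by
      have e1 : (t ^ (2 * M)) ^ (2:ℕ) = t ^ (4 * M - 1) * t := by
        rw [← pow_mul, ← pow_succ]
        congr 1; omega
      have e2 : (Real.exp (-t ^ 2)) ^ (2:ℕ) = Real.exp (-(2 * t ^ 2)) := by
        rw [pow_two, ← Real.exp_add]; congr 1; ring
      rw [mul_pow, e1, e2]; ring
    simp only [hfdef]
    rw [ENNReal.mul_rpow_of_nonneg _ _ (by norm_num : (0:ℝ) ≤ 2), ENNReal.rpow_two,
      ENNReal.rpow_two, ← ENNReal.ofReal_pow (by positivity), hinv t ht0, e0,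
      ENNReal.ofReal_mul (by positivity), mul_assoc,
      ENNReal.mul_inv_cancel h1 ofReal_ne_top, mul_one]
  have hg2 : (∫⁻ t in Set.Ioo 0 rB, g t ^ (2:ℝ)) ≤
      ∫⁻ t in Set.Ioi (0:ℝ), ENNReal.ofReal ((φ t) ^ 2) / ENNReal.ofReal t := by
    have heq : (∫⁻ t in Set.Ioo 0 rB, g t ^ (2:ℝ)) =
        ∫⁻ t in Set.Ioo 0 rB, ENNReal.ofReal ((φ t) ^ 2) / ENNReal.ofReal t := by
      refine setLIntegral_congr_fun measurableSet_Ioo (fun t ht => ?_)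
      obtain ⟨ht0, htr⟩ := ht
      simp only [hgdef]
      rw [ENNReal.mul_rpow_of_nonneg _ _ (by norm_num : (0:ℝ) ≤ 2), ENNReal.rpow_two,
        ENNReal.rpow_two, ← ENNReal.ofReal_pow (abs_nonneg _), hinv t ht0, sq_abs,
        div_eq_mul_inv]
    rw [heq]
    exact lintegral_mono' (Measure.restrict_mono Set.Ioo_subset_Ioi_self le_rfl) le_rfl
  calc (‖∫ t in Set.Ioi (0:ℝ), t ^ (2 * M) * Real.exp (-t ^ 2) * φ t / t‖₊ : ℝ≥0∞)
      ≤ ∫⁻ t in Set.Ioi (0:ℝ), (‖t ^ (2 * M) * Real.exp (-t ^ 2) * φ t / t‖₊ : ℝ≥0∞) :=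
        enorm_integral_le_lintegral_enorm _
    _ = ∫⁻ t in Set.Ioo 0 rB, f t * g t := hres
    _ ≤ (∫⁻ t in Set.Ioo 0 rB, f t ^ (2:ℝ)) ^ (1/2 : ℝ) *
        (∫⁻ t in Set.Ioo 0 rB, g t ^ (2:ℝ)) ^ (1/2 : ℝ) := hHolder
    _ ≤ (∫⁻ t in Set.Ioo 0 rB, ENNReal.ofReal (t ^ (4 * M - 1) * Real.exp (-(2 * t ^ 2)))) ^ (1/2 : ℝ) *
        (∫⁻ t in Set.Ioi (0:ℝ), ENNReal.ofReal ((φ t) ^ 2) / ENNReal.ofReal t) ^ (1/2 : ℝ) := by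
        rw [hf2]
        exact mul_le_mul_right (ENNReal.rpow_le_rpow hg2 (by norm_num)) _


noncomputable def auxIexp : ℝ := ∫ t in Set.Ioi (0:ℝ), Real.exp (-(3 * t))

lemma auxIexp_nonneg : 0 ≤ auxIexp :=
  integral_nonneg fun t => (Real.exp_pos _).le

noncomputable def auxC1 (M : ℕ) : ℝ :=
  ((4 * M - 1).factorial : ℝ) * Real.exp 2 * auxIexp + 1

lemma auxC1_one_le (M : ℕ) : 1 ≤ auxC1 M := by
  have h := auxIexp_nonneg
  have : (0:ℝ) ≤ ((4 * M - 1).factorial : ℝ) * Real.exp 2 * auxIexp := by positivity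
  unfold auxC1; linarith

lemma auxI1 (M : ℕ) (hM : 1 ≤ M) {rB : ℝ} (hrB : 0 < rB) {k : ℕ} (hk : k ≤ M) :
    (∫⁻ t in Set.Ioo 0 rB, ENNReal.ofReal (t ^ (4 * M - 1) * Real.exp (-(2 * t ^ 2)))) ≤
      ENNReal.ofReal (auxC1 M * rB ^ (4 * k)) := by
  have hC1 := auxC1_one_le M
  rcases le_or_gt rB 1 with h1 | h1
  · -- small radius : compare with the constant rB ^ (4M-1)
    calc (∫⁻ t in Set.Ioo 0 rB, ENNReal.ofReal (t ^ (4 * M - 1) * Real.exp (-(2 * t ^ 2))))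
        ≤ ∫⁻ _t in Set.Ioo 0 rB, ENNReal.ofReal (rB ^ (4 * M - 1)) := by
          refine lintegral_mono_ae ((ae_restrict_iff' measurableSet_Ioo).2 (ae_of_all _ ?_))
          intro t ht
          refine ENNReal.ofReal_le_ofReal ?_
          have h2 : t ^ (4 * M - 1) ≤ rB ^ (4 * M - 1) := pow_le_pow_left₀ ht.1.le ht.2.le _
          have h3 : Real.exp (-(2 * t ^ 2)) ≤ 1 := Real.exp_le_one_iff.2 (by nlinarith [sq_nonneg t])
          calc t ^ (4 * M - 1) * Real.exp (-(2 * t ^ 2)) ≤ t ^ (4 * M - 1) * 1 := by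
                exact mul_le_mul_of_nonneg_left h3 (pow_nonneg ht.1.le _)
            _ ≤ rB ^ (4 * M - 1) := by rw [mul_one]; exact h2
      _ = ENNReal.ofReal (rB ^ (4 * M - 1)) * volume (Set.Ioo (0:ℝ) rB) := by
          rw [setLIntegral_const]
      _ = ENNReal.ofReal (rB ^ (4 * M - 1)) * ENNReal.ofReal rB := by
          rw [Real.volume_Ioo, sub_zero]
      _ = ENNReal.ofReal (rB ^ (4 * M)) := by
          rw [← ENNReal.ofReal_mul (by positivity), ← pow_succ,
            Nat.sub_add_cancel (by omega)]
      _ ≤ ENNReal.ofReal (auxC1 M * rB ^ (4 * k)) := by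
          refine ENNReal.ofReal_le_ofReal ?_
          have h4 : rB ^ (4 * M) ≤ rB ^ (4 * k) :=
            pow_le_pow_of_le_one hrB.le h1 (by omega)
          nlinarith [pow_nonneg hrB.le (4 * k)]
  · -- large radius : exponential decay
    set K : ℝ := ((4 * M - 1).factorial : ℝ) * Real.exp 2 with hK
    have hK0 : 0 ≤ K := by positivity
    have hpt : ∀ t ∈ Set.Ioo (0:ℝ) rB,
        t ^ (4 * M - 1) * Real.exp (-(2 * t ^ 2)) ≤ K * Real.exp (-(3 * t)) := by
      intro t ht
      have hth : t ^ (4 * M - 1) ≤ ((4 * M - 1).factorial : ℝ) * Real.exp t := by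
        have h := Real.pow_div_factorial_le_exp t ht.1.le (4 * M - 1)
        rw [div_le_iff₀ (by positivity)] at h
        linarith [h]
      have hexp : Real.exp (-(2 * t ^ 2)) ≤ Real.exp (2 - 4 * t) :=
        Real.exp_le_exp.2 (by nlinarith [sq_nonneg (t - 1)])
      calc t ^ (4 * M - 1) * Real.exp (-(2 * t ^ 2))
          ≤ (((4 * M - 1).factorial : ℝ) * Real.exp t) * Real.exp (2 - 4 * t) := by
            refine mul_le_mul hth hexp (Real.exp_pos _).le (by positivity)
        _ = K * Real.exp (-(3 * t)) := by
            have hee : Real.exp t * Real.exp (2 - 4 * t) =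
                Real.exp 2 * Real.exp (-(3 * t)) := by
              rw [← Real.exp_add, ← Real.exp_add]; congr 1; ring
            rw [hK, mul_assoc, hee, ← mul_assoc]
    calc (∫⁻ t in Set.Ioo 0 rB, ENNReal.ofReal (t ^ (4 * M - 1) * Real.exp (-(2 * t ^ 2))))
        ≤ ∫⁻ t in Set.Ioo 0 rB, ENNReal.ofReal (K * Real.exp (-(3 * t))) := by
          refine lintegral_mono_ae ((ae_restrict_iff' measurableSet_Ioo).2 (ae_of_all _ ?_))
          exact fun t ht => ENNReal.ofReal_le_ofReal (hpt t ht)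
      _ ≤ ∫⁻ t in Set.Ioi (0:ℝ), ENNReal.ofReal (K * Real.exp (-(3 * t))) :=
          lintegral_mono' (Measure.restrict_mono Set.Ioo_subset_Ioi_self le_rfl) le_rfl
      _ = ENNReal.ofReal (∫ t in Set.Ioi (0:ℝ), K * Real.exp (-(3 * t))) := by
          rw [ofReal_integral_eq_lintegral_ofReal]
          · have : IntegrableOn (fun t => Real.exp (-3 * t)) (Set.Ioi (0:ℝ)) :=
              exp_neg_integrableOn_Ioi 0 (by norm_num)
            have h2 : IntegrableOn (fun t => K * Real.exp (-(3 * t))) (Set.Ioi (0:ℝ)) := by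
              simpa [neg_mul, IntegrableOn] using this.const_mul K
            exact h2
          · exact ae_of_all _ fun t => by positivity
      _ = ENNReal.ofReal (K * auxIexp) := by rw [integral_const_mul]; rfl
      _ ≤ ENNReal.ofReal (auxC1 M * rB ^ (4 * k)) := by
          refine ENNReal.ofReal_le_ofReal ?_
          have h4 : (1:ℝ) ≤ rB ^ (4 * k) := one_le_pow₀ h1.le
          have h5 : auxC1 M = K * auxIexp + 1 := rfl
          nlinarith [auxIexp_nonneg, hK0, mul_nonneg hK0 auxIexp_nonneg]

theorem stmt7 {n : ℕ} (p : EuclideanSpace ℝ (Fin n) → ℝ) (hp : Measurable p)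
    (M : ℕ) (hM : 1 ≤ M) :
    ∃ C > 0, ∀ (xB : EuclideanSpace ℝ (Fin n)) (rB : ℝ), 0 < rB →
      ∀ A : EuclideanSpace ℝ (Fin n) → ℝ → ℝ,
      Measurable (fun q : EuclideanSpace ℝ (Fin n) × ℝ => A q.1 q.2) →
      (∀ x t, ¬ (dist x xB < rB - t ∧ 0 < t ∧ t < rB) → A x t = 0) →
      tentNormSq A ^ (1 / 2 : ℝ) ≤
        ENNReal.ofReal ((volume (ball xB rB)).toReal ^ (1 / 2 : ℝ) *
          (chiNorm p (ball xB rB))⁻¹) →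
      (∀ x, x ∉ ball xB rB → PiM M A x = 0) ∧
      ∀ k ≤ M,
        eLpNorm (PiM M A) 2 volume ≤
          ENNReal.ofReal (C * rB ^ (2 * k) *
            (volume (ball xB rB)).toReal ^ (1 / 2 : ℝ) * (chiNorm p (ball xB rB))⁻¹) := by
  
  classical
  set c := volume (ball (0 : EuclideanSpace ℝ (Fin n)) 1) with hcdef
  have hc0 : c ≠ 0 := (measure_ball_pos _ _ one_pos).ne'
  have hcT : c ≠ ⊤ := measure_ball_lt_top.ne
  have hctR : 0 < c.toReal := ENNReal.toReal_pos hc0 hcT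
  refine ⟨(auxC1 M) ^ (1/2 : ℝ) * c.toReal ^ (-(1/2) : ℝ), ?_, ?_⟩
  · have h1 : (0:ℝ) < auxC1 M := lt_of_lt_of_le one_pos (auxC1_one_le M)
    exact mul_pos (Real.rpow_pos_of_pos h1 _) (Real.rpow_pos_of_pos hctR _)
  intro xB rB hrB A hA hsupp htent
  constructor
  · -- support of `PiM M A`
    intro x hx
    rw [mem_ball] at hx
    have hzero : ∀ t ∈ Set.Ioi (0:ℝ), t ^ (2 * M) * Real.exp (-t ^ 2) * A x t / t = 0 := by
      intro t ht
      have hAz : A x t = 0 := by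
        refine hsupp x t ?_
        rintro ⟨h1, h2, h3⟩
        exact hx (lt_trans h1 (by linarith))
      rw [hAz]; ring
    simp only [PiM]
    rw [setIntegral_congr_fun measurableSet_Ioi hzero]
    simp
  · -- the L² bound
    intro k hk
    set I1 := ∫⁻ t in Set.Ioo 0 rB, ENNReal.ofReal (t ^ (4 * M - 1) * Real.exp (-(2 * t ^ 2)))
      with hI1def
    set Jx : EuclideanSpace ℝ (Fin n) → ℝ≥0∞ := fun x =>
      ∫⁻ t in Set.Ioi (0:ℝ), ENNReal.ofReal ((A x t) ^ 2) / ENNReal.ofReal t with hJxdef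
    set J := ∫⁻ x, Jx x with hJdef
    have hI1 : I1 ≤ ENNReal.ofReal (auxC1 M * rB ^ (4 * k)) := auxI1 M hM hrB hk
    have hI1T : I1 ≠ ⊤ := (lt_of_le_of_lt hI1 ENNReal.ofReal_lt_top).ne
    have hCSx : ∀ x, (‖PiM M A x‖₊ : ℝ≥0∞) ≤ I1 ^ (1/2:ℝ) * (Jx x) ^ (1/2:ℝ) := by
      intro x
      have hφ : Measurable (fun t => A x t) :=
        hA.comp (measurable_const.prodMk measurable_id)
      have hs : ∀ t, ¬ (0 < t ∧ t < rB) → A x t = 0 := fun t h =>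
        hsupp x t (fun hbig => h ⟨hbig.2.1, hbig.2.2⟩)
      simpa only [PiM] using auxCS M hM (fun t => A x t) hφ hs
    have hTent : tentNormSq A = c * J := auxTent A hA
    have hJc : J = c⁻¹ * tentNormSq A := by
      rw [hTent, ← mul_assoc, ENNReal.inv_mul_cancel hc0 hcT, one_mul]
    have h2 : eLpNorm (PiM M A) 2 volume =
        (∫⁻ x, (‖PiM M A x‖₊ : ℝ≥0∞) ^ (2:ℝ)) ^ (1/2:ℝ) := by
      rw [eLpNorm_eq_lintegral_rpow_enorm_toReal two_ne_zero ENNReal.ofNat_ne_top]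
      norm_num
      simp only [enorm_eq_nnnorm]
    have h3 : ∀ x, (‖PiM M A x‖₊ : ℝ≥0∞) ^ (2:ℝ) ≤ I1 * Jx x := by
      intro x
      calc (‖PiM M A x‖₊ : ℝ≥0∞) ^ (2:ℝ)
          ≤ (I1 ^ (1/2:ℝ) * (Jx x) ^ (1/2:ℝ)) ^ (2:ℝ) :=
            ENNReal.rpow_le_rpow (hCSx x) (by norm_num)
        _ = I1 * Jx x := by
            rw [ENNReal.mul_rpow_of_nonneg _ _ (by norm_num : (0:ℝ) ≤ 2),
              ← ENNReal.rpow_mul, ← ENNReal.rpow_mul]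
            norm_num
    have h4 : (∫⁻ x, (‖PiM M A x‖₊ : ℝ≥0∞) ^ (2:ℝ)) ≤ I1 * J := by
      calc (∫⁻ x, (‖PiM M A x‖₊ : ℝ≥0∞) ^ (2:ℝ)) ≤ ∫⁻ x, I1 * Jx x := lintegral_mono h3
        _ = I1 * J := lintegral_const_mul' _ _ hI1T
    -- real-number auxiliary facts
    have ha : (0:ℝ) < auxC1 M * rB ^ (4 * k) := by
      have h1 : (0:ℝ) < auxC1 M := lt_of_lt_of_le one_pos (auxC1_one_le M)
      positivity
    have hpow : ((rB ^ (4 * k) : ℝ)) ^ (1/2:ℝ) = rB ^ (2 * k) := by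
      rw [← Real.rpow_natCast rB (4 * k), ← Real.rpow_mul hrB.le]
      rw [show ((4 * k : ℕ) : ℝ) * (1/2) = ((2 * k : ℕ) : ℝ) by push_cast; ring]
      exact Real.rpow_natCast rB (2 * k)
    have hsplita : ((auxC1 M * rB ^ (4 * k) : ℝ)) ^ (1/2:ℝ) =
        (auxC1 M) ^ (1/2:ℝ) * rB ^ (2 * k) := by
      rw [Real.mul_rpow (le_of_lt (lt_of_lt_of_le one_pos (auxC1_one_le M))) (by positivity),
        hpow]
    have hcinv : (c⁻¹ : ℝ≥0∞) ^ (1/2:ℝ) = ENNReal.ofReal (c.toReal ^ (-(1/2) : ℝ)) := by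
      rw [ENNReal.inv_rpow]
      rw [Real.rpow_neg hctR.le, ENNReal.ofReal_inv_of_pos (Real.rpow_pos_of_pos hctR _)]
      congr 1
      rw [← ENNReal.ofReal_rpow_of_pos hctR, ENNReal.ofReal_toReal hcT]
    calc eLpNorm (PiM M A) 2 volume
        = (∫⁻ x, (‖PiM M A x‖₊ : ℝ≥0∞) ^ (2:ℝ)) ^ (1/2:ℝ) := h2
      _ ≤ (I1 * J) ^ (1/2:ℝ) := ENNReal.rpow_le_rpow h4 (by norm_num)
      _ = I1 ^ (1/2:ℝ) * J ^ (1/2:ℝ) :=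
          ENNReal.mul_rpow_of_nonneg _ _ (by norm_num)
      _ = I1 ^ (1/2:ℝ) * ((c⁻¹) ^ (1/2:ℝ) * (tentNormSq A) ^ (1/2:ℝ)) := by
          rw [hJc, ENNReal.mul_rpow_of_nonneg _ _ (by norm_num : (0:ℝ) ≤ 1/2)]
      _ ≤ (ENNReal.ofReal (auxC1 M * rB ^ (4 * k))) ^ (1/2:ℝ) *
          ((c⁻¹) ^ (1/2:ℝ) * ENNReal.ofReal ((volume (ball xB rB)).toReal ^ (1 / 2 : ℝ) *
            (chiNorm p (ball xB rB))⁻¹)) := by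
          refine mul_le_mul' (ENNReal.rpow_le_rpow hI1 (by norm_num)) (mul_le_mul' le_rfl htent)
      _ = ENNReal.ofReal ((auxC1 M) ^ (1/2:ℝ) * c.toReal ^ (-(1/2) : ℝ) * rB ^ (2 * k) *
            (volume (ball xB rB)).toReal ^ (1 / 2 : ℝ) * (chiNorm p (ball xB rB))⁻¹) := by
          rw [hcinv, ENNReal.ofReal_rpow_of_pos ha, hsplita,
            ← ENNReal.ofReal_mul
              (show (0:ℝ) ≤ c.toReal ^ (-(1/2):ℝ) from
                Real.rpow_nonneg ENNReal.toReal_nonneg _),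
            ← ENNReal.ofReal_mul
              (show (0:ℝ) ≤ auxC1 M ^ (1/2:ℝ) * rB ^ (2 * k) from
                mul_nonneg (Real.rpow_nonneg
                  (le_trans zero_le_one (auxC1_one_le M)) _) (pow_nonneg hrB.le _))]
          congr 1
          ring
end
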